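/- Let f_W be any three-layer ReLU network on ℝ^d with path-norm with bias PN_b(W) ≤ 1. Then f_W can be written as a convex combination of the constant function 1 and functions from the class G_{3L} consisting of all functions of the form x ↦ ± ReLU( ∑_{j=1}^{m1} w_j ReLU(⟨θ_j,x⟩ − b_j) + w_0 ) with ∑_{j=1}^{m1} |w_j| ‖(θ_j,b_j)‖₂ + |w_0| ≤ 1. -/

import Mathlib

noncomputable section

/-- `ReLU(t) = max(t, 0)`. -/
def relu (t : ℝ) : ℝ := max t 0

/-- A three-layer ReLU neural network with weights
`W = ((θ_j, b_j)_j, (W_{i,j})_{i=1..m2, j=0..m1}, (w_i)_{i=0..m2})`. -/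
structure ThreeLayerNet (d : ℕ) where
  m1 : ℕ
  m2 : ℕ
  θ : Fin m1 → EuclideanSpace ℝ (Fin d)
  b : Fin m1 → ℝ
  W : Fin m2 → Fin m1 → ℝ
  W0 : Fin m2 → ℝ
  w : Fin m2 → ℝ
  w0 : ℝ

/-- The function computed by a three-layer ReLU network. -/
def ThreeLayerNet.eval {d : ℕ} (N : ThreeLayerNet d) (x : EuclideanSpace ℝ (Fin d)) : ℝ :=
  ∑ i, N.w i * relu (∑ j, N.W i j * relu ((inner ℝ (N.θ j) x : ℝ) - N.b j) + N.W0 i) + N.w0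

/-- The path-norm with bias of a three-layer ReLU network. -/
def ThreeLayerNet.pnB {d : ℕ} (N : ThreeLayerNet d) : ℝ :=
  ∑ i, |N.w i| *
    (∑ j, |N.W i j| * Real.sqrt (‖N.θ j‖ ^ 2 + (N.b j) ^ 2) + |N.W0 i|) + |N.w0|

/-- Membership in the class `G_{3L}` of functions
`x ↦ ± ReLU(∑_j w_j ReLU(⟨θ_j,x⟩ − b_j) + w_0)` with
`∑_j |w_j| ‖(θ_j, b_j)‖₂ + |w_0| ≤ 1`. -/
def memG3L {d : ℕ} (g : EuclideanSpace ℝ (Fin d) → ℝ) : Prop :=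
  ∃ (m1 : ℕ) (s : ℝ) (w : Fin m1 → ℝ) (θ : Fin m1 → EuclideanSpace ℝ (Fin d))
    (b : Fin m1 → ℝ) (w0 : ℝ),
    (s = 1 ∨ s = -1) ∧
    (∑ j, |w j| * Real.sqrt (‖θ j‖ ^ 2 + (b j) ^ 2) + |w0| ≤ 1) ∧
    ∀ x, g x = s * relu (∑ j, w j * relu ((inner ℝ (θ j) x : ℝ) - b j) + w0)

/-!
Split the path-norm as `∑ᵢ |wᵢ| cᵢ + |w₀|`, where `cᵢ` is the path-norm of the `i`-th neuron of
the second hidden layer. By positive homogeneity of ReLU, that neuron is `cᵢ` times a function of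
`G_{3L}` (its weights divided by `cᵢ`; if `cᵢ = 0` the neuron vanishes). Hence `f_W` is a
combination `∑ₖ cₖ gₖ` of functions of `G_{3L}` (the constant `1 = ReLU(1)` among them) with
`∑ₖ |cₖ| ≤ 1`. Since `G_{3L}` contains `0` and is closed under negation, such a combination lies
in its convex hull: push the signs into the `gₖ` and give the leftover weight to `0`.
-/

open Finset

lemma relu_mul_of_nonneg {c : ℝ} (hc : 0 ≤ c) (t : ℝ) : relu (c * t) = c * relu t := by
  rw [relu, relu, mul_max_of_nonneg _ _ hc, mul_zero]

theorem sum_smul_mem_convexHull_of_neg_mem {V ι : Type*} [AddCommGroup V] [Module ℝ V]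
    [Fintype ι] {s : Set V} (h0 : 0 ∈ s) (hneg : ∀ v ∈ s, -v ∈ s) {c : ι → ℝ} {v : ι → V}
    (hv : ∀ i, v i ∈ s) (hc : ∑ i, |c i| ≤ 1) : ∑ i, c i • v i ∈ convexHull ℝ s := by
  refine mem_convexHull_of_exists_fintype (fun o : Option ι => o.elim (1 - ∑ i, |c i|) (|c ·|))
    (fun o => o.elim 0 fun i => if 0 ≤ c i then v i else -v i) ?_ ?_ ?_ ?_
  · rintro (_ | i)
    exacts [sub_nonneg.mpr hc, abs_nonneg _]
  · simp [Fintype.sum_option]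
  · rintro (_ | i)
    · exact h0
    · dsimp only [Option.elim]
      split_ifs
      exacts [hv i, hneg _ (hv i)]
  · simp only [Fintype.sum_option, Option.elim, smul_zero, zero_add]
    refine sum_congr rfl fun i _ => ?_
    split_ifs with h
    · rw [abs_of_nonneg h]
    · rw [abs_of_neg (not_le.mp h), neg_smul, smul_neg, neg_neg]

theorem exists_fin_sum_smul_of_mem_convexHull {V : Type*} [AddCommGroup V] [Module ℝ V]
    {s : Set V} {x : V} (hx : x ∈ convexHull ℝ s) :
    ∃ (n : ℕ) (a : Fin n → ℝ) (v : Fin n → V),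
      (∀ i, 0 ≤ a i) ∧ ∑ i, a i = 1 ∧ (∀ i, v i ∈ s) ∧ x = ∑ i, a i • v i := by
  obtain ⟨ι, _, a, v, ha0, ha1, hv, rfl⟩ := mem_convexHull_iff_exists_fintype.mp hx
  let e := (Fintype.equivFin ι).symm
  exact ⟨_, a ∘ e, v ∘ e, fun i => ha0 _, (e.sum_comp a).trans ha1, fun i => hv _,
    (e.sum_comp _).symm⟩

section Neuron

variable {E : Type*} [NormedAddCommGroup E] {m : ℕ}

def neuronPathNorm (W : Fin m → ℝ) (θ : Fin m → E) (b : Fin m → ℝ) (W0 : ℝ) : ℝ :=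
  ∑ j, |W j| * √(‖θ j‖ ^ 2 + b j ^ 2) + |W0|

lemma sqrt_norm_sq_add_sq_eq_zero {v : E} {c : ℝ} : √(‖v‖ ^ 2 + c ^ 2) = 0 ↔ v = 0 ∧ c = 0 := by
  rw [Real.sqrt_eq_zero (by positivity), add_eq_zero_iff_of_nonneg (by positivity) (by positivity)]
  simp

variable (W : Fin m → ℝ) (θ : Fin m → E) (b : Fin m → ℝ) (W0 : ℝ)

lemma neuronPathNorm_nonneg : 0 ≤ neuronPathNorm W θ b W0 := by
  unfold neuronPathNorm
  positivity

lemma neuronPathNorm_mul (r : ℝ) :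
    neuronPathNorm (fun j => r * W j) θ b (r * W0) = |r| * neuronPathNorm W θ b W0 := by
  simp only [neuronPathNorm, abs_mul, mul_add, mul_sum, mul_assoc]

variable [InnerProductSpace ℝ E]

def secondLayerNeuron (x : E) : ℝ :=
  relu (∑ j, W j * relu (inner ℝ (θ j) x - b j) + W0)

lemma secondLayerNeuron_mul {r : ℝ} (hr : 0 ≤ r) (x : E) :
    secondLayerNeuron (fun j => r * W j) θ b (r * W0) x = r * secondLayerNeuron W θ b W0 x := by
  simp only [secondLayerNeuron, ← relu_mul_of_nonneg hr, mul_add, mul_sum, mul_assoc]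

lemma secondLayerNeuron_eq_zero_of_neuronPathNorm_eq_zero
    (h : neuronPathNorm W θ b W0 = 0) (x : E) : secondLayerNeuron W θ b W0 x = 0 := by
  rw [neuronPathNorm, add_eq_zero_iff_of_nonneg (by positivity) (abs_nonneg _),
    sum_eq_zero_iff_of_nonneg fun j _ => by positivity] at h
  obtain ⟨hterms, hW0⟩ := h
  have hsum : ∑ j, W j * relu (inner ℝ (θ j) x - b j) = 0 := by
    refine sum_eq_zero fun j hj => ?_
    rcases mul_eq_zero.mp (hterms j hj) with hW | hθb
    · rw [abs_eq_zero.mp hW, zero_mul]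
    · obtain ⟨hθ, hb⟩ := sqrt_norm_sq_add_sq_eq_zero.mp hθb
      simp [hθ, hb, relu]
  rw [secondLayerNeuron, hsum, abs_eq_zero.mp hW0, zero_add, relu, max_self]

end Neuron

section G3L

variable {d : ℕ}

lemma memG3L_neg {g : EuclideanSpace ℝ (Fin d) → ℝ} (hg : memG3L g) : memG3L (-g) := by
  obtain ⟨m, s, w, θ, b, w0, hs, hnorm, hgx⟩ := hg
  refine ⟨m, -s, w, θ, b, w0, hs.symm.imp (by simp [·]) (by simp [·]), hnorm, fun x => ?_⟩
  rw [Pi.neg_apply, hgx, neg_mul]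

lemma memG3L_zero : memG3L (0 : EuclideanSpace ℝ (Fin d) → ℝ) :=
  ⟨0, 1, 0, 0, 0, 0, Or.inl rfl, by simp, fun _ => by simp [relu]⟩

lemma memG3L_one : memG3L (1 : EuclideanSpace ℝ (Fin d) → ℝ) :=
  ⟨0, 1, 0, 0, 0, 1, Or.inl rfl, by simp, fun _ => by simp [relu]⟩

lemma memG3L_secondLayerNeuron {m : ℕ} {W : Fin m → ℝ} {θ : Fin m → EuclideanSpace ℝ (Fin d)}
    {b : Fin m → ℝ} {W0 : ℝ} (h : neuronPathNorm W θ b W0 ≤ 1) :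
    memG3L (secondLayerNeuron W θ b W0) :=
  ⟨m, 1, W, θ, b, W0, Or.inl rfl, h, fun _ => (one_mul _).symm⟩

theorem exists_memG3L_smul_eq {m : ℕ} (W : Fin m → ℝ) (θ : Fin m → EuclideanSpace ℝ (Fin d))
    (b : Fin m → ℝ) (W0 : ℝ) :
    ∃ g, memG3L g ∧ secondLayerNeuron W θ b W0 = neuronPathNorm W θ b W0 • g := by
  set c := neuronPathNorm W θ b W0
  rcases (neuronPathNorm_nonneg W θ b W0).eq_or_lt with hc | hc
  · refine ⟨0, memG3L_zero, funext fun x => ?_⟩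
    simp [secondLayerNeuron_eq_zero_of_neuronPathNorm_eq_zero W θ b W0 hc.symm]
  · refine ⟨secondLayerNeuron (fun j => c⁻¹ * W j) θ b (c⁻¹ * W0), ?_, funext fun x => ?_⟩
    · refine memG3L_secondLayerNeuron ?_
      rw [neuronPathNorm_mul, abs_of_pos (inv_pos.mpr hc), inv_mul_cancel₀ hc.ne']
    · rw [Pi.smul_apply, secondLayerNeuron_mul _ _ _ _ (inv_nonneg.mpr hc.le), smul_eq_mul,
        mul_inv_cancel_left₀ hc.ne']

end G3L

lemma ThreeLayerNet.eval_eq {d : ℕ} (N : ThreeLayerNet d) (x : EuclideanSpace ℝ (Fin d)) :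
    N.eval x = ∑ i, N.w i * secondLayerNeuron (N.W i) N.θ N.b (N.W0 i) x + N.w0 :=
  rfl

lemma ThreeLayerNet.pnB_eq {d : ℕ} (N : ThreeLayerNet d) :
    N.pnB = ∑ i, |N.w i| * neuronPathNorm (N.W i) N.θ N.b (N.W0 i) + |N.w0| :=
  rfl

/-- Any three-layer ReLU network of path-norm (with bias) at most one is a convex
combination of the constant function `1` and functions from `G_{3L}`. -/
theorem three_layer_convex_combination (d : ℕ) (N : ThreeLayerNet d) (hN : N.pnB ≤ 1) :
    ∃ (n : ℕ) (a : Fin n → ℝ) (g : Fin n → (EuclideanSpace ℝ (Fin d) → ℝ)),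
      (∀ i, 0 ≤ a i) ∧ (∑ i, a i = 1) ∧
      (∀ i, g i = (fun _ => (1 : ℝ)) ∨ memG3L (g i)) ∧
      ∀ x, N.eval x = ∑ i, a i * g i x := by
  choose g hg hneuron using fun i => exists_memG3L_smul_eq (N.W i) N.θ N.b (N.W0 i)
  let c : Option (Fin N.m2) → ℝ :=
    fun o => o.elim N.w0 fun i => N.w i * neuronPathNorm (N.W i) N.θ N.b (N.W0 i)
  let v : Option (Fin N.m2) → EuclideanSpace ℝ (Fin d) → ℝ := fun o => o.elim 1 g
  have hv : ∀ o, memG3L (v o) := by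
    rintro (_ | i)
    exacts [memG3L_one, hg i]
  have hc : ∑ o, |c o| ≤ 1 := by
    simpa [c, Fintype.sum_option, abs_mul, abs_of_nonneg (neuronPathNorm_nonneg _ _ _ _),
      N.pnB_eq, add_comm] using hN
  have heval : N.eval = ∑ o, c o • v o := by
    funext x
    simp [c, v, Fintype.sum_option, N.eval_eq, hneuron, mul_assoc, add_comm]
  obtain ⟨n, a, f, ha0, ha1, hf, hsum⟩ := exists_fin_sum_smul_of_mem_convexHull
    (sum_smul_mem_convexHull_of_neg_mem (s := {f | memG3L f}) memG3L_zero
      (fun _ => memG3L_neg) hv hc)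
  refine ⟨n, a, f, ha0, ha1, fun i => Or.inr (hf i), fun x => ?_⟩
  rw [heval, hsum]
  simp

end
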